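/- For every closed prenex quantified Boolean formula Ψ whose matrix is a CNF without tautological clauses, the Bernays–Schönfinkel CNF f(Ψ) defined by the following translation is in the QEALM fragment and is satisfiable if and only if Ψ is true. Translation f: the signature has two constants 0 and 1; each universally quantified Boolean variable u of Ψ becomes a first-order variable u; each existentially quantified Boolean variable e becomes a predicate p_e whose arity is the number of universal variables occurring to the left of e in the prefix; each clause C of the matrix becomes the clause C' containing, for each occurrence of a positive existential literal e in C, the literal p_e(a_1,...,a_m), and for each negative existential literal ¬e, the literal ¬p_e(a_1,...,a_m), where for the i-th universal variable u of the prefix (counted left to right, with i at most the arity of the predicate) the argument a_i equals 0 if u is a literal of C, equals 1 if ¬u is a literal of C, and equals the first-order variable u otherwise. -/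

import Mathlib

/-- Terms over variables `V` and constant symbols `K`
(Bernays–Schönfinkel: the only function symbols are constants). -/
inductive Trm (V K : Type) : Type where
  | var : V → Trm V K
  | const : K → Trm V K
deriving DecidableEq

/-- A first-order literal (no equality): a polarity, a predicate symbol
and a list of argument terms. -/
structure Lit (V K P : Type) : Type where
  pol : Bool
  pred : P
  args : List (Trm V K)
deriving DecidableEq

/-- A clause is a (finite) set of literals, read disjunctively. -/
abbrev Clause (V K P : Type) := Finset (Lit V K P)

/-- A CNF is a list of clauses, read conjunctively,
with all variables universally quantified. -/
abbrev CNF (V K P : Type) := List (Clause V K P)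

variable {V K P : Type}

/-- The argument of a literal at the (1-based) position `i`. -/
def Lit.argAt (l : Lit V K P) : ℕ → Option (Trm V K)
  | 0 => none
  | i + 1 => l.args[i]?

/-- Variable `u` occurs at argument position `i` of the literal `l`. -/
def Lit.varAt (l : Lit V K P) (u : V) (i : ℕ) : Prop := l.argAt i = some (Trm.var u)

/-- Variable `u` occurs in the literal `l`. -/
def Lit.hasVar (l : Lit V K P) (u : V) : Prop := ∃ i, l.varAt u i

/-- `i` is the least argument position at which `u` occurs in `l`. -/
def Lit.firstOccAt (l : Lit V K P) (u : V) (i : ℕ) : Prop :=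
  l.varAt u i ∧ ∀ j, l.varAt u j → i ≤ j

/-- The QEALM clause condition: whenever a variable `u` occurs in several
literals of the clause, the least position at which it occurs is the same in
all these literals, and these literals agree on all argument positions up to
(and including) that one (a shared initial segment). -/
def QEALMClause (C : Clause V K P) : Prop :=
  ∀ (u : V), ∀ l₁ ∈ C, ∀ l₂ ∈ C, l₁.hasVar u → l₂.hasVar u →
    ∃ i, l₁.firstOccAt u i ∧ l₂.firstOccAt u i ∧ ∀ j ≤ i, l₁.argAt j = l₂.argAt j

/-- A CNF is in the QEALM fragment iff every clause satisfies the QEALM clause condition. -/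
def QEALM (φ : CNF V K P) : Prop := ∀ C ∈ φ, QEALMClause C

/-- A first-order structure for the signature `(K, P)` (no equality). -/
structure Model (K P : Type) : Type 1 where
  Dom : Type
  dne : Nonempty Dom
  constVal : K → Dom
  predVal : P → List Dom → Prop

/-- Value of a term in a model under a variable assignment. -/
def Trm.val (M : Model K P) (ρ : V → M.Dom) : Trm V K → M.Dom
  | .var u => ρ u
  | .const c => M.constVal c

/-- Truth of a literal in a model under a variable assignment. -/
def Lit.holds (M : Model K P) (ρ : V → M.Dom) (l : Lit V K P) : Prop :=
  if l.pol then M.predVal l.pred (l.args.map (Trm.val M ρ))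
  else ¬ M.predVal l.pred (l.args.map (Trm.val M ρ))

/-- Truth of a clause (a disjunction of literals). -/
def Clause.holds (M : Model K P) (ρ : V → M.Dom) (C : Clause V K P) : Prop :=
  ∃ l ∈ C, l.holds M ρ

/-- First-order satisfiability (without equality) of a universally quantified CNF. -/
def CNF.Satisfiable (φ : CNF V K P) : Prop :=
  ∃ M : Model K P, ∀ ρ : V → M.Dom, ∀ C ∈ φ, C.holds M ρ

/-- Applying a substitution to a term. -/
def Trm.subst (σ : V → Trm V K) : Trm V K → Trm V K
  | .var u => σ u
  | .const c => .const c

/-- Applying a substitution to a literal. -/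
def Lit.subst (σ : V → Trm V K) (l : Lit V K P) : Lit V K P :=
  ⟨l.pol, l.pred, l.args.map (Trm.subst σ)⟩

/-- Applying a substitution to a clause. -/
def Clause.subst [DecidableEq V] [DecidableEq K] [DecidableEq P]
    (σ : V → Trm V K) (C : Clause V K P) : Clause V K P :=
  C.image (Lit.subst σ)

/-- Applying a substitution to a CNF. -/
def CNF.subst [DecidableEq V] [DecidableEq K] [DecidableEq P]
    (σ : V → Trm V K) (φ : CNF V K P) : CNF V K P :=
  φ.map (Clause.subst σ)

/-- An outer variable of a clause: a variable appearing in every literal of the clause. -/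
def OuterVar (C : Clause V K P) (u : V) : Prop := ∀ l ∈ C, l.hasVar u

/-- `i` is the least position of an occurrence of `u` in any literal of `C`. -/
def LeastOccIn (C : Clause V K P) (u : V) (i : ℕ) : Prop :=
  (∃ l ∈ C, l.varAt u i) ∧ ∀ j, (∃ l ∈ C, l.varAt u j) → i ≤ j

/-- `i` is an outer position of the clause `C`. -/
def OuterPosClause (C : Clause V K P) (i : ℕ) : Prop :=
  ∃ u : V, OuterVar C u ∧ LeastOccIn C u i

/-- `i` is a neutral position of the clause `C`: some term `t`, a constant or an
outer variable of `C`, occupies the `i`-th argument of every literal of `C`. -/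
def NeutralPos (C : Clause V K P) (i : ℕ) : Prop :=
  ∃ t : Trm V K,
    ((∃ c, t = Trm.const c) ∨ (∃ u, t = Trm.var u ∧ OuterVar C u)) ∧
    ∀ l ∈ C, l.argAt i = some t

/-- `i` is an outer position of the CNF `φ`: an outer position of some clause and a
neutral position of every clause. -/
def OuterPosCNF (φ : CNF V K P) (i : ℕ) : Prop :=
  (∃ C ∈ φ, OuterPosClause C i) ∧ ∀ D ∈ φ, NeutralPos D i

/-- Variable `u` occurs at argument position `i` in some literal of `φ`. -/
def VarOccursAt (φ : CNF V K P) (u : V) (i : ℕ) : Prop :=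
  ∃ C ∈ φ, ∃ l ∈ C, l.varAt u i

/-- `σ` is the substitution that replaces every variable occurring at an argument
position `i` that is an outer position of `φ` by the constant `c i`, and leaves
all other variables unchanged. -/
def IsOuterSubst (φ : CNF V K P) (c : ℕ → K) (σ : V → Trm V K) : Prop :=
  (∀ u i, OuterPosCNF φ i → VarOccursAt φ u i → σ u = Trm.const (c i)) ∧
  (∀ u, (¬ ∃ i, OuterPosCNF φ i ∧ VarOccursAt φ u i) → σ u = Trm.var u)

/-- A clause is inseparable if it is a single literal or some variable occurs in
every literal of the clause. -/
def InsepClause (C : Clause V K P) : Prop :=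
  (∃ l, C = {l}) ∨ ∃ u : V, ∀ l ∈ C, l.hasVar u

/-- `Kc` is a component of a clause `C`: a non-empty inseparable subclause of `C`
closed under sharing variables with literals of `C`. -/
def IsComponent (Kc C : Clause V K P) : Prop :=
  Kc.Nonempty ∧ Kc ⊆ C ∧ InsepClause Kc ∧
    ∀ a ∈ Kc, ∀ b ∈ C, (∃ u : V, a.hasVar u ∧ b.hasVar u) → b ∈ Kc

/-- All variables shared between `l₁` and `l₂` occur as arguments in positions `≤ m`. -/
def SharesUpTo (l₁ l₂ : Lit V K P) (m : ℕ) : Prop :=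
  ∀ u : V, l₁.hasVar u → l₂.hasVar u →
    (∃ j ≤ m, l₁.varAt u j) ∧ (∃ j ≤ m, l₂.varAt u j)

/-- `i` is a fork index of `φ`: for some clause `C` of `φ` and literals `l₁, l₂` of
`C` (not necessarily distinct), `i` is the minimal value such that every variable
shared between `l₁` and `l₂` occurs at some argument position `≤ i`.  In particular,
`0` is a fork index if some such pair shares no variables. -/
def ForkIndex (φ : CNF V K P) (i : ℕ) : Prop :=
  ∃ C ∈ φ, ∃ l₁ ∈ C, ∃ l₂ ∈ C, IsLeast {m | SharesUpTo l₁ l₂ m} i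

/-! ### Quantified Boolean formulas (prenex, CNF matrix) -/

/-- A propositional literal: a polarity and a propositional atom (a natural number). -/
abbrev PLit := Bool × ℕ

/-- A propositional clause. -/
abbrev PClause := List PLit

/-- A propositional CNF. -/
abbrev PCNF := List PClause

/-- Truth of a propositional CNF under an assignment. -/
def PCNF.eval (α : ℕ → Bool) (m : PCNF) : Prop :=
  ∀ Cl ∈ m, ∃ l ∈ Cl, α l.2 = l.1

/-- Truth of a prenex QBF, given as a quantifier prefix (`true` = existential,
`false` = universal), an assignment to the (free) atoms and a CNF matrix:
`∀x φ := φ[⊥/x] ∧ φ[⊤/x]` and `∃x φ := φ[⊥/x] ∨ φ[⊤/x]`. -/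
def QBFTrue : List (Bool × ℕ) → (ℕ → Bool) → PCNF → Prop
  | [], α, m => PCNF.eval α m
  | (q, x) :: pre, α, m =>
      if q then ∃ b : Bool, QBFTrue pre (Function.update α x b) m
      else ∀ b : Bool, QBFTrue pre (Function.update α x b) m

/-! ### The translation `f` from QBF to Bernays–Schönfinkel -/

/-- The universal variables occurring to the left of the atom `e` in the prefix. -/
def universalsBefore (pre : List (Bool × ℕ)) (e : ℕ) : List ℕ :=
  ((pre.takeWhile (fun q => q.2 != e)).filter (fun q => !q.1)).map Prod.snd

/-- The argument contributed by the universal variable `u` for a QBF clause `C`: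
the constant `0` (encoded as `false`) if the literal `u` is in `C`, the constant
`1` (encoded as `true`) if `¬u` is in `C`, and the first-order variable `u` otherwise. -/
def argOf (C : PClause) (u : ℕ) : Trm ℕ Bool :=
  if (true, u) ∈ C then Trm.const false
  else if (false, u) ∈ C then Trm.const true
  else Trm.var u

/-- The first-order literal corresponding to an occurrence of the existential
literal `l` in the QBF clause `C`: the predicate `p_e` for `e = l.2`, with the same
polarity, whose arity is the number of universal variables left of `e` in the prefix. -/
def trLit (pre : List (Bool × ℕ)) (C : PClause) (l : PLit) : Lit ℕ Bool ℕ :=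
  ⟨l.1, l.2, (universalsBefore pre l.2).map (argOf C)⟩

/-- The translation of a QBF clause: one first-order literal for each occurrence of
an existential literal in the clause. -/
def trClause (pre : List (Bool × ℕ)) (C : PClause) : Clause ℕ Bool ℕ :=
  ((C.filter (fun l => decide ((true, l.2) ∈ pre))).map (trLit pre C)).toFinset

/-- The translation `f` of a prenex QBF into a Bernays–Schönfinkel CNF over the two
constants `0` (= `false`) and `1` (= `true`). -/
def trCNF (pre : List (Bool × ℕ)) (m : PCNF) : CNF ℕ Bool ℕ :=
  m.map (trClause pre)

/-!
The argument list of every `p_e` is a prefix of the list of all universal variables of the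
prefix, and that list has no repetitions. So each first-order variable sits at one fixed
position in every literal of a translated clause, and the argument lists of these literals
form a chain under the prefix order; this is the QEALM condition.

A QBF is true iff its existential atoms have Skolem functions of the universal atoms to their
left, and interpretations of the predicates `p_e` over `{0, 1}` are exactly such Skolem
functions. To evaluate a translated clause under a first-order assignment `ρ`, read `ρ` as the
universal assignment that falsifies every universal literal of the clause (possible because no
clause is tautological) and agrees with `ρ` elsewhere; the clause then holds iff one of its
existential literals is made true by the Skolem functions.
-/

def Lit.IsLinear (l : Lit V K P) : Prop := ∀ u i j, l.varAt u i → l.varAt u j → i = j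

theorem Lit.le_length_of_argAt_eq_some {l : Lit V K P} {i : ℕ} {t : Trm V K}
    (h : l.argAt i = some t) : i ≤ l.args.length := by
  cases i with
  | zero => cases h
  | succ k => exact (List.getElem?_eq_some_iff.mp h).1

theorem Lit.argAt_eq_of_args_prefix {l₁ l₂ : Lit V K P} (h : l₁.args <+: l₂.args) {j : ℕ}
    (hj : j ≤ l₁.args.length) : l₁.argAt j = l₂.argAt j := by
  cases j with
  | zero => rfl
  | succ k =>
    exact (List.getElem?_eq_getElem hj).trans (List.prefix_iff_getElem?.mp h k hj).symm

theorem Lit.varAt_of_args_prefix {l₁ l₂ : Lit V K P} (h : l₁.args <+: l₂.args)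
    {u : V} {i : ℕ} (hu : l₁.varAt u i) : l₂.varAt u i :=
  (Lit.argAt_eq_of_args_prefix h (Lit.le_length_of_argAt_eq_some hu)).symm.trans hu

theorem Lit.firstOccAt_of_args_prefix {l₁ l₂ : Lit V K P} (h : l₁.args <+: l₂.args)
    (hlin : l₂.IsLinear) {u : V} {i : ℕ} (hu : l₁.varAt u i) :
    l₁.firstOccAt u i ∧ l₂.firstOccAt u i ∧ ∀ j ≤ i, l₁.argAt j = l₂.argAt j := by
  have hu₂ := Lit.varAt_of_args_prefix h hu
  refine ⟨⟨hu, fun j hj => (hlin u i j hu₂ (Lit.varAt_of_args_prefix h hj)).le⟩,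
    ⟨hu₂, fun j hj => (hlin u i j hu₂ hj).le⟩, fun j hj => ?_⟩
  exact Lit.argAt_eq_of_args_prefix h (hj.trans (Lit.le_length_of_argAt_eq_some hu))

theorem qealmClause_of_prefix_chain (C : Clause V K P) (hlin : ∀ l ∈ C, l.IsLinear)
    (hchain : ∀ l₁ ∈ C, ∀ l₂ ∈ C, l₁.args <+: l₂.args ∨ l₂.args <+: l₁.args) :
    QEALMClause C := by
  rintro u l₁ hl₁ l₂ hl₂ ⟨i₁, h₁⟩ ⟨i₂, h₂⟩
  rcases hchain l₁ hl₁ l₂ hl₂ with h | h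
  · exact ⟨i₁, Lit.firstOccAt_of_args_prefix h (hlin l₂ hl₂) h₁⟩
  · obtain ⟨h₂', h₁', hagree⟩ := Lit.firstOccAt_of_args_prefix h (hlin l₁ hl₁) h₂
    exact ⟨i₂, h₁', h₂', fun j hj => (hagree j hj).symm⟩

def universals (pre : List (Bool × ℕ)) : List ℕ :=
  (pre.filter (fun q => !q.1)).map Prod.snd

section Translation

variable {pre : List (Bool × ℕ)}

theorem universalsBefore_prefix (pre : List (Bool × ℕ)) (e : ℕ) :
    universalsBefore pre e <+: universals pre :=
  ((List.takeWhile_prefix _).filter _).map _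

theorem universalsBefore_nodup (hnodup : (pre.map Prod.snd).Nodup) (e : ℕ) :
    (universalsBefore pre e).Nodup :=
  (hnodup.sublist (List.filter_sublist.map _)).sublist (universalsBefore_prefix pre e).sublist

theorem mem_of_mem_universalsBefore {e u : ℕ} (h : u ∈ universalsBefore pre e) :
    (false, u) ∈ pre := by
  obtain ⟨⟨q, v⟩, hq, rfl⟩ := List.mem_map.mp ((universalsBefore_prefix pre e).subset h)
  obtain ⟨hq, hq₁⟩ := List.mem_filter.mp hq
  simp_all

theorem universalsBefore_cons_self (q : Bool) (x : ℕ) :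
    universalsBefore ((q, x) :: pre) x = [] := by
  simp [universalsBefore]

theorem universalsBefore_cons_of_ne (q : Bool) {x e : ℕ} (h : x ≠ e) :
    universalsBefore ((q, x) :: pre) e =
      if q then universalsBefore pre e else x :: universalsBefore pre e := by
  cases q <;> simp [universalsBefore, h]

theorem eq_of_argOf_eq_var {C : PClause} {w u : ℕ} (h : argOf C w = Trm.var u) : w = u := by
  unfold argOf at h
  split_ifs at h
  simp_all

theorem argOf_eq_const_not {C : PClause} {b : Bool} {u : ℕ} (hb : (b, u) ∈ C)
    (hnotaut : ¬ ((true, u) ∈ C ∧ (false, u) ∈ C)) : argOf C u = Trm.const (!b) := by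
  cases b <;> simp_all [argOf]

theorem mem_trClause {C : PClause} {l : Lit ℕ Bool ℕ} :
    l ∈ trClause pre C ↔ ∃ a ∈ C, (true, a.2) ∈ pre ∧ trLit pre C a = l := by
  simp [trClause, and_assoc]

theorem exists_getElem?_of_varAt_trLit {C : PClause} {a : PLit} {u i : ℕ}
    (h : (trLit pre C a).varAt u i) :
    ∃ k, i = k + 1 ∧ (universalsBefore pre a.2)[k]? = some u := by
  obtain _ | k := i
  · cases h
  · simp only [Lit.varAt, Lit.argAt, trLit, List.getElem?_map, Option.map_eq_some_iff] at h
    obtain ⟨w, hw, hwu⟩ := h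
    exact ⟨k, rfl, eq_of_argOf_eq_var hwu ▸ hw⟩

theorem trLit_isLinear (hnodup : (pre.map Prod.snd).Nodup) (C : PClause) (a : PLit) :
    (trLit pre C a).IsLinear := by
  intro u i j hi hj
  obtain ⟨k, rfl, hk⟩ := exists_getElem?_of_varAt_trLit hi
  obtain ⟨k', rfl, hk'⟩ := exists_getElem?_of_varAt_trLit hj
  have hlt : k < (universalsBefore pre a.2).length := (List.getElem?_eq_some_iff.mp hk).1
  rw [(List.getElem?_inj hlt (universalsBefore_nodup hnodup a.2)).mp (hk.trans hk'.symm)]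

theorem qealm_trCNF (hnodup : (pre.map Prod.snd).Nodup) (m : PCNF) : QEALM (trCNF pre m) := by
  intro D hD
  obtain ⟨C, -, rfl⟩ := List.mem_map.mp hD
  refine qealmClause_of_prefix_chain _ (fun l hl => ?_) (fun l₁ hl₁ l₂ hl₂ => ?_)
  · obtain ⟨a, -, -, rfl⟩ := mem_trClause.mp hl
    exact trLit_isLinear hnodup C a
  · obtain ⟨a₁, -, -, rfl⟩ := mem_trClause.mp hl₁
    obtain ⟨a₂, -, -, rfl⟩ := mem_trClause.mp hl₂
    exact (List.prefix_or_prefix_of_prefix (universalsBefore_prefix pre a₁.2)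
      (universalsBefore_prefix pre a₂.2)).imp (·.map _) (·.map _)

end Translation

section Skolem

variable {pre : List (Bool × ℕ)} {α β : ℕ → Bool} {s : ℕ → List Bool → Bool}

def skolemAssign (pre : List (Bool × ℕ)) (α : ℕ → Bool) (s : ℕ → List Bool → Bool)
    (β : ℕ → Bool) (v : ℕ) : Bool :=
  if (true, v) ∈ pre then s v ((universalsBefore pre v).map β)
  else if (false, v) ∈ pre then β v
  else α v

theorem not_mem_of_not_mem_map_snd {x : ℕ} (hx : x ∉ pre.map Prod.snd) (b : Bool) :
    (b, x) ∉ pre :=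
  fun h => hx (List.mem_map_of_mem h)

theorem not_mem_true_of_mem_false (hnodup : (pre.map Prod.snd).Nodup) {v : ℕ}
    (hv : (false, v) ∈ pre) : (true, v) ∉ pre := fun h => by
  simpa using List.inj_on_of_nodup_map hnodup h hv rfl

theorem skolemAssign_of_mem_true {v : ℕ} (hv : (true, v) ∈ pre) :
    skolemAssign pre α s β v = s v ((universalsBefore pre v).map β) :=
  if_pos hv

theorem skolemAssign_of_mem_false (hnodup : (pre.map Prod.snd).Nodup) {v : ℕ}
    (hv : (false, v) ∈ pre) : skolemAssign pre α s β v = β v := by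
  rw [skolemAssign, if_neg (not_mem_true_of_mem_false hnodup hv), if_pos hv]

theorem skolemAssign_nil : skolemAssign [] α s β = α := rfl

theorem skolemAssign_cons_true {x : ℕ} (hx : x ∉ pre.map Prod.snd) :
    skolemAssign ((true, x) :: pre) α s β =
      skolemAssign pre (Function.update α x (s x [])) s β := by
  funext v
  by_cases hvx : v = x
  · subst hvx
    simp [skolemAssign, not_mem_of_not_mem_map_snd hx, universalsBefore_cons_self]
  · simp [skolemAssign, universalsBefore_cons_of_ne _ (Ne.symm hvx), hvx]

theorem skolemAssign_cons_false {x : ℕ} (hx : x ∉ pre.map Prod.snd) :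
    skolemAssign ((false, x) :: pre) α s β =
      skolemAssign pre (Function.update α x (β x)) (fun v L => s v (β x :: L)) β := by
  funext v
  by_cases hvx : v = x
  · subst hvx
    simp [skolemAssign, not_mem_of_not_mem_map_snd hx]
  · simp [skolemAssign, universalsBefore_cons_of_ne _ (Ne.symm hvx), hvx]

theorem skolemAssign_update_skolem {x : ℕ} (hx : x ∉ pre.map Prod.snd)
    (t : List Bool → Bool) :
    skolemAssign pre α (Function.update s x t) β = skolemAssign pre α s β := by
  funext v
  unfold skolemAssign
  split_ifs with hv
  · rw [Function.update_of_ne (by rintro rfl; exact not_mem_of_not_mem_map_snd hx _ hv)]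
  all_goals rfl

theorem skolemAssign_update_universal {x : ℕ} (hx : x ∉ pre.map Prod.snd) (b : Bool) :
    skolemAssign pre α s (Function.update β x b) = skolemAssign pre α s β := by
  have hne : ∀ u, (false, u) ∈ pre → u ≠ x := by
    rintro u hu rfl
    exact not_mem_of_not_mem_map_snd hx _ hu
  funext v
  unfold skolemAssign
  split_ifs with hv hv'
  · congr 1
    exact List.map_congr_left fun u hu =>
      Function.update_of_ne (hne u (mem_of_mem_universalsBefore hu)) _ _
  · exact Function.update_of_ne (hne v hv') _ _
  · rfl

theorem qbfTrue_iff_exists_skolem (hnodup : (pre.map Prod.snd).Nodup) (α : ℕ → Bool)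
    (m : PCNF) :
    QBFTrue pre α m ↔ ∃ s, ∀ β, PCNF.eval (skolemAssign pre α s β) m := by
  induction pre generalizing α with
  | nil => simp [QBFTrue, skolemAssign_nil]
  | cons q pre ih =>
    obtain ⟨_ | _, x⟩ := q
    all_goals
      obtain ⟨hx, hnodup⟩ := List.nodup_cons.mp hnodup
      simp only [QBFTrue, Bool.false_eq_true, if_false, if_true]
    · simp only [ih hnodup, skolemAssign_cons_false hx]
      constructor
      · intro h
        choose S hS using h
        refine ⟨fun v L => match L with | [] => false | c :: L => S c v L, fun β => ?_⟩
        exact hS (β x) β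
      · rintro ⟨s, hs⟩ c
        refine ⟨fun v L => s v (c :: L), fun β => ?_⟩
        simpa [skolemAssign_update_universal hx] using hs (Function.update β x c)
    · simp only [ih hnodup, skolemAssign_cons_true hx]
      constructor
      · rintro ⟨c, s, hs⟩
        exact ⟨Function.update s x fun _ => c, fun β => by
          simpa [skolemAssign_update_skolem hx] using hs β⟩
      · rintro ⟨s, hs⟩
        exact ⟨s x [], s, hs⟩

end Skolem

open Classical in
noncomputable def Model.skolem (M : Model K P) (e : P) (L : List K) : Bool :=
  decide (M.predVal e (L.map M.constVal))

def skolemModel (s : ℕ → List Bool → Bool) : Model Bool ℕ :=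
  ⟨Bool, ⟨false⟩, id, fun e L => s e L = true⟩

theorem skolemModel_skolem (s : ℕ → List Bool → Bool) : (skolemModel s).skolem = s := by
  funext e L
  simp [Model.skolem, skolemModel]

section Semantics

variable {pre : List (Bool × ℕ)} {C : PClause} (M : Model Bool ℕ) (ρ : ℕ → M.Dom)
  (β : ℕ → Bool)

theorem val_argOf_of_forall_ne {u : ℕ} (h : ∀ b, (b, u) ∈ C → β u ≠ b) :
    (argOf C u).val M (M.constVal ∘ β) = M.constVal (β u) := by
  unfold argOf
  split_ifs
  · simp_all [Trm.val]
  · simp_all [Trm.val]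
  · rfl

theorem trLit_holds_iff {a : PLit}
    (hval : ∀ u, (false, u) ∈ pre → (argOf C u).val M ρ = M.constVal (β u)) :
    (trLit pre C a).holds M ρ ↔ M.skolem a.2 ((universalsBefore pre a.2).map β) = a.1 := by
  have hargs : ((universalsBefore pre a.2).map (argOf C)).map (Trm.val M ρ) =
      ((universalsBefore pre a.2).map β).map M.constVal := by
    simp only [List.map_map]
    exact List.map_congr_left fun u hu => hval u (mem_of_mem_universalsBefore hu)
  cases h : a.1 <;> simp [Lit.holds, trLit, Model.skolem, hargs, h]

theorem trClause_holds_iff (hnodup : (pre.map Prod.snd).Nodup)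
    (hclosed : ∀ l ∈ C, l.2 ∈ pre.map Prod.snd) (α : ℕ → Bool)
    (hval : ∀ u, (false, u) ∈ pre → (argOf C u).val M ρ = M.constVal (β u))
    (hfalse : ∀ l ∈ C, (false, l.2) ∈ pre → β l.2 ≠ l.1) :
    (trClause pre C).holds M ρ ↔ ∃ l ∈ C, skolemAssign pre α M.skolem β l.2 = l.1 := by
  simp only [Clause.holds, mem_trClause]
  constructor
  · rintro ⟨_, ⟨a, ha, hex, rfl⟩, hholds⟩
    exact ⟨a, ha,
      (skolemAssign_of_mem_true hex).trans ((trLit_holds_iff M ρ β hval).mp hholds)⟩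
  · rintro ⟨a, ha, hsat⟩
    obtain ⟨⟨_ | _, v⟩, hq, hv⟩ := List.mem_map.mp (hclosed a ha)
    all_goals obtain rfl : v = a.2 := hv
    · exact absurd ((skolemAssign_of_mem_false hnodup hq).symm.trans hsat) (hfalse a ha hq)
    · refine ⟨_, ⟨a, ha, hq, rfl⟩, (trLit_holds_iff M ρ β hval).mpr ?_⟩
      exact (skolemAssign_of_mem_true hq).symm.trans hsat

end Semantics

theorem satisfiable_trCNF_iff_exists_skolem {pre : List (Bool × ℕ)} {m : PCNF}
    (hclosed : ∀ Cl ∈ m, ∀ l ∈ Cl, l.2 ∈ pre.map Prod.snd)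
    (hnodup : (pre.map Prod.snd).Nodup)
    (hnotaut : ∀ Cl ∈ m, ¬ ∃ v, (true, v) ∈ Cl ∧ (false, v) ∈ Cl) (α : ℕ → Bool) :
    (trCNF pre m).Satisfiable ↔ ∃ s, ∀ β, PCNF.eval (skolemAssign pre α s β) m := by
  constructor
  · rintro ⟨M, hM⟩
    refine ⟨M.skolem, fun β C hC => ?_⟩
    by_cases huniv : ∃ l ∈ C, (false, l.2) ∈ pre ∧ β l.2 = l.1
    · obtain ⟨l, hl, hu, hβ⟩ := huniv
      exact ⟨l, hl, (skolemAssign_of_mem_false hnodup hu).trans hβ⟩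
    · push Not at huniv
      refine (trClause_holds_iff M _ β hnodup (hclosed C hC) α
        (fun u hu => val_argOf_of_forall_ne M β fun b hb => huniv (b, u) hb hu) huniv).mp ?_
      exact hM _ _ (List.mem_map_of_mem hC)
  · rintro ⟨s, hs⟩
    refine ⟨skolemModel s, fun ρ D hD => ?_⟩
    obtain ⟨C, hC, rfl⟩ := List.mem_map.mp hD
    -- `β` falsifies every universal literal of `C` and agrees with `ρ` on the other atoms.
    let β u := (argOf C u).val (skolemModel s) ρ
    have hfalse : ∀ l ∈ C, (false, l.2) ∈ pre → β l.2 ≠ l.1 := fun l hl _ => by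
      simp [β, argOf_eq_const_not hl (fun h => hnotaut C hC ⟨l.2, h⟩), Trm.val, skolemModel]
    rw [trClause_holds_iff _ ρ β hnodup (hclosed C hC) α (fun _ _ => rfl) hfalse,
      skolemModel_skolem]
    exact hs β C hC

/-- For every closed prenex QBF (each atom quantified exactly
once, every atom of the matrix quantified) whose CNF matrix has no tautological
clauses, the translated Bernays–Schönfinkel CNF is in the QEALM fragment and is
satisfiable iff the QBF is true. -/
theorem statement_7 (pre : List (Bool × ℕ)) (m : PCNF)
    (hclosed : ∀ Cl ∈ m, ∀ l ∈ Cl, l.2 ∈ pre.map Prod.snd)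
    (hnodup : (pre.map Prod.snd).Nodup)
    (hnotaut : ∀ Cl ∈ m, ¬ ∃ v, (true, v) ∈ Cl ∧ (false, v) ∈ Cl) :
    QEALM (trCNF pre m) ∧
      (CNF.Satisfiable (trCNF pre m) ↔ QBFTrue pre (fun _ => false) m) :=
  ⟨qealm_trCNF hnodup m,
    (satisfiable_trCNF_iff_exists_skolem hclosed hnodup hnotaut _).trans
      (qbfTrue_iff_exists_skolem hnodup _ m).symm⟩
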